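/- arXiv:1802.00538 — 2 statements merged into one kernel-verified Lean document; each statement's English description precedes it below -/
import Mathlib

section
/- Minimization of a trace functional over mean-zero functions: let θ be a probability measure on ℝⁿ with finite second moment and covariance Σ, and let H̃ = [[H̃₁₁, H̃₁₂],[H̃₂₁, H̃₂₂]] be a symmetric positive definite matrix partitioned compatibly with vectors (x, u) ∈ ℝⁿ × ℝᵏ. For a measurable square-integrable function q̃ : ℝⁿ → ℝᵏ with ∫ q̃ dθ = 0, let S(q̃) denote the covariance under θ of the random vector (X, q̃(X)) where X ~ θ. Then min over such q̃ of tr(H̃ S(q̃)) is attained at the linear function q̃*(x) = -H̃₂₂⁻¹ H̃₂₁ (x - μ(θ)), and the minimum value equals tr((H̃₁₁ - H̃₁₂ H̃₂₂⁻¹ H̃₂₁) Σ). -/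
open Matrix MeasureTheory

lemma mv_dot {a b : ℕ} (M : Matrix (Fin a) (Fin b) ℝ) (w : Fin b → ℝ) (z : Fin a → ℝ) :
    (M *ᵥ w) ⬝ᵥ z = w ⬝ᵥ (Mᵀ *ᵥ z) := by
  rw [dotProduct_mulVec, vecMul_transpose, dotProduct_comm]

lemma key_quad {n k : ℕ} (H11 : Matrix (Fin n) (Fin n) ℝ) (H12 : Matrix (Fin n) (Fin k) ℝ)
    (H22 : Matrix (Fin k) (Fin k) ℝ) (hsym : H22ᵀ = H22) (hinv : H22 * H22⁻¹ = 1)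
    (v : Fin n → ℝ) (u : Fin k → ℝ) :
    Sum.elim v u ⬝ᵥ (fromBlocks H11 H12 H12ᵀ H22 *ᵥ Sum.elim v u)
      = v ⬝ᵥ ((H11 - H12*H22⁻¹*H12ᵀ) *ᵥ v)
        + (u + (H22⁻¹*H12ᵀ) *ᵥ v) ⬝ᵥ (H22 *ᵥ (u + (H22⁻¹*H12ᵀ) *ᵥ v)) := by
  have hinv' : (H22⁻¹)ᵀ = H22⁻¹ := by rw [Matrix.transpose_nonsing_inv, hsym]
  have hinv2 : H22⁻¹ * H22 = 1 := mul_eq_one_comm.mp hinv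
  have hBt : (H22⁻¹ * H12ᵀ)ᵀ = H12 * H22⁻¹ := by
    rw [Matrix.transpose_mul, hinv', Matrix.transpose_transpose]
  have e1 : ((H22⁻¹ * H12ᵀ) *ᵥ v) ⬝ᵥ (H22 *ᵥ u) = v ⬝ᵥ (H12 *ᵥ u) := by
    rw [mv_dot, mulVec_mulVec, hBt, Matrix.mul_assoc, hinv2, Matrix.mul_one]
  have e2 : ((H22⁻¹ * H12ᵀ) *ᵥ v) ⬝ᵥ (H12ᵀ *ᵥ v) = v ⬝ᵥ ((H12 * H22⁻¹ * H12ᵀ) *ᵥ v) := by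
    rw [mv_dot, mulVec_mulVec, hBt]
  have h1 : H22 * (H22⁻¹ * H12ᵀ) = H12ᵀ := by rw [← Matrix.mul_assoc, hinv, Matrix.one_mul]
  simp only [fromBlocks_mulVec, sumElim_dotProduct_sumElim, mulVec_add, dotProduct_add,
    add_dotProduct, sub_mulVec, dotProduct_sub, mulVec_mulVec, h1, Sum.elim_comp_inl,
    Sum.elim_comp_inr, e1, e2]
  ring

lemma h22_posdef {n k : ℕ} {H11 : Matrix (Fin n) (Fin n) ℝ} {H12 : Matrix (Fin n) (Fin k) ℝ}
    {H22 : Matrix (Fin k) (Fin k) ℝ} (hpd : (fromBlocks H11 H12 H12ᵀ H22).PosDef) :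
    H22.PosDef := by
  refine Matrix.PosDef.of_dotProduct_mulVec_pos ?_ ?_
  · have h := hpd.1
    ext i j
    have h2 := congrFun (congrFun h (Sum.inr i)) (Sum.inr j)
    simpa [conjTranspose_apply, fromBlocks_apply₂₂] using h2
  · intro u hu
    have hw : Sum.elim (0 : Fin n → ℝ) u ≠ 0 := by
      intro h
      exact hu (funext fun i => congrFun h (Sum.inr i))
    have h := hpd.dotProduct_mulVec_pos hw
    simpa [fromBlocks_mulVec, sumElim_dotProduct_sumElim] using h

/-- Minimization of a trace functional over mean-zero functions.
With `θ` a probability measure on `ℝⁿ` with mean `μθ` and covariance `Σθ`, and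
`H̃ = [[H11, H12],[H12ᵀ, H22]]` symmetric positive definite, the minimum over
measurable square-integrable `θ`-mean-zero `q̃ : ℝⁿ → ℝᵏ` of
`tr(H̃ · Cov((X, q̃(X))))` is attained at the linear function
`q̃*(x) = -H22⁻¹ H12ᵀ (x - μθ)` and equals `tr((H11 - H12 H22⁻¹ H12ᵀ) Σθ)`. -/
theorem trace_min_over_mean_zero
    {n k : ℕ} (θ : Measure (Fin n → ℝ)) [IsProbabilityMeasure θ]
    (H11 : Matrix (Fin n) (Fin n) ℝ) (H12 : Matrix (Fin n) (Fin k) ℝ)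
    (H22 : Matrix (Fin k) (Fin k) ℝ)
    (hpd : (Matrix.fromBlocks H11 H12 H12ᵀ H22).PosDef)
    (hmom1 : ∀ i : Fin n, Integrable (fun x => x i) θ)
    (hmom2 : ∀ i j : Fin n, Integrable (fun x => x i * x j) θ)
    (μθ : Fin n → ℝ) (hμθ : ∀ i, μθ i = ∫ x, x i ∂θ)
    (Sθ : Matrix (Fin n) (Fin n) ℝ)
    (hSθ : ∀ i j, Sθ i j = ∫ x, (x i - μθ i) * (x j - μθ j) ∂θ)
    -- covariance matrix of (X, q̃(X)) for X ~ θ, given `q̃` mean zero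
    (S : ((Fin n → ℝ) → (Fin k → ℝ)) → Matrix (Fin n ⊕ Fin k) (Fin n ⊕ Fin k) ℝ)
    (hS : ∀ q i j, S q i j =
      ∫ x, (Sum.elim (fun a => x a - μθ a) (q x) i) *
            (Sum.elim (fun a => x a - μθ a) (q x) j) ∂θ)
    -- admissibility: measurable, square-integrable, θ-mean zero
    (Adm : ((Fin n → ℝ) → (Fin k → ℝ)) → Prop)
    (hAdm : ∀ q, Adm q ↔ Measurable q ∧
      (∀ i j : Fin n ⊕ Fin k, Integrable (fun x =>
        (Sum.elim (fun a => x a - μθ a) (q x) i) *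
        (Sum.elim (fun a => x a - μθ a) (q x) j)) θ) ∧
      (∫ x, q x ∂θ) = 0) :
    let qstar : (Fin n → ℝ) → (Fin k → ℝ) :=
      fun x => -((H22⁻¹ * H12ᵀ) *ᵥ (fun a => x a - μθ a))
    Adm qstar ∧
    (∀ q, Adm q →
      ((Matrix.fromBlocks H11 H12 H12ᵀ H22) * S qstar).trace ≤
        ((Matrix.fromBlocks H11 H12 H12ᵀ H22) * S q).trace) ∧
    ((Matrix.fromBlocks H11 H12 H12ᵀ H22) * S qstar).trace =
      ((H11 - H12 * H22⁻¹ * H12ᵀ) * Sθ).trace := by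
  
  intro qstar
  have hqdef : qstar = fun x => -((H22⁻¹ * H12ᵀ) *ᵥ (fun a => x a - μθ a)) := rfl
  set Hb := Matrix.fromBlocks H11 H12 H12ᵀ H22 with hHb
  set B := H22⁻¹ * H12ᵀ with hBdef
  set v : (Fin n → ℝ) → Fin n → ℝ := fun x a => x a - μθ a with hvdef
  set w : ((Fin n → ℝ) → (Fin k → ℝ)) → (Fin n → ℝ) → (Fin n ⊕ Fin k) → ℝ :=
    fun q x => Sum.elim (v x) (q x) with hwdef
  have hpd22 : H22.PosDef := h22_posdef hpd
  have hsym : H22ᵀ = H22 := hpd22.1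
  have hinv : H22 * H22⁻¹ = 1 :=
    Matrix.mul_nonsing_inv _ ((Matrix.isUnit_iff_isUnit_det _).mp hpd22.isUnit)
  -- basic integrability
  have hv1 : ∀ i, Integrable (fun x => v x i) θ := fun i => (hmom1 i).sub (integrable_const _)
  have hv2 : ∀ i j, Integrable (fun x => v x i * v x j) θ := by
    intro i j
    have h : (fun x => v x i * v x j)
        = fun x => x i * x j - μθ j * x i - (μθ i * x j - μθ i * μθ j) := by
      funext x; simp only [hvdef]; ring
    rw [h]
    exact ((hmom2 i j).sub ((hmom1 i).const_mul _)).sub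
      (((hmom1 j).const_mul _).sub (integrable_const _))
  have hvz : ∀ i, ∫ x, v x i ∂θ = 0 := by
    intro i
    simp only [hvdef]
    rw [integral_sub (hmom1 i) (integrable_const _), integral_const]
    simp [hμθ i]
  -- linear expression for qstar
  have hq_lin : ∀ x i, qstar x i = ∑ j, (-(B i j)) * v x j := by
    intro x i
    rw [hqdef]
    simp [Matrix.mulVec, dotProduct, Finset.sum_neg_distrib, neg_mul, hvdef]
  -- coefficient form of w qstar
  set C : (Fin n ⊕ Fin k) → Fin n → ℝ :=
    Sum.elim (fun a j => if j = a then 1 else 0) (fun b j => -(B b j)) with hCdef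
  have hwlin : ∀ i x, w qstar x i = ∑ j, C i j * v x j := by
    intro i x
    cases i with
    | inl a => simp [hwdef, hCdef]
    | inr b => simpa [hwdef, hCdef] using hq_lin x b
  -- products of components of w qstar integrable
  have hintw : ∀ i j, Integrable (fun x => w qstar x i * w qstar x j) θ := by
    intro i j
    have h : (fun x => w qstar x i * w qstar x j)
        = fun x => ∑ p, ∑ r, (C i p * C j r) * (v x p * v x r) := by
      funext x
      rw [hwlin, hwlin, Finset.sum_mul_sum]
      exact Finset.sum_congr rfl fun p _ => Finset.sum_congr rfl fun r _ => by ring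
    rw [h]
    exact integrable_finset_sum _ fun p _ => integrable_finset_sum _ fun r _ =>
      (hv2 p r).const_mul _
  -- measurability of qstar
  have hmq : Measurable qstar := by
    apply measurable_pi_lambda
    intro i
    have h : (fun x => qstar x i) = fun x => ∑ j, (-(B i j)) * v x j := by
      funext x; exact hq_lin x i
    rw [h]
    exact Finset.measurable_sum _ fun j _ =>
      (((measurable_pi_apply j).sub measurable_const).const_mul _)
  -- mean zero of qstar
  have hmz : (∫ x, qstar x ∂θ) = 0 := by
    have h : qstar = fun x => ∑ j, v x j • (fun i => -(B i j)) := by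
      funext x
      funext i
      rw [hq_lin]
      simp only [Finset.sum_apply, Pi.smul_apply, smul_eq_mul]
      exact Finset.sum_congr rfl fun j _ => by ring
    rw [h, integral_finset_sum _ fun j _ => (hv1 j).smul_const _]
    simp [integral_smul_const, hvz]
  have hAdmStar : Adm qstar := (hAdm qstar).mpr ⟨hmq, hintw, hmz⟩
  -- trace formula
  have htr : ∀ q, (∀ i j, Integrable (fun x => w q x i * w q x j) θ) →
      (Hb * S q).trace = ∫ x, w q x ⬝ᵥ (Hb *ᵥ w q x) ∂θ := by
    intro q hint
    have h1 : (fun x => w q x ⬝ᵥ (Hb *ᵥ w q x))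
        = fun x => ∑ i, ∑ j, Hb i j * (w q x j * w q x i) := by
      funext x
      simp only [dotProduct, Matrix.mulVec, Finset.mul_sum]
      exact Finset.sum_congr rfl fun i _ => Finset.sum_congr rfl fun j _ => by ring
    rw [h1, integral_finset_sum _ fun i _ => integrable_finset_sum _ fun j _ =>
      ((hint j i).const_mul (Hb i j))]
    have h2 : (Hb * S q).trace = ∑ i, ∑ j, Hb i j * S q j i := by
      simp [Matrix.trace, Matrix.diag, Matrix.mul_apply]
    rw [h2]
    refine Finset.sum_congr rfl fun i _ => ?_
    rw [integral_finset_sum _ fun j _ => ((hint j i).const_mul (Hb i j))]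
    refine Finset.sum_congr rfl fun j _ => ?_
    rw [hS, integral_const_mul]
  -- pointwise key identity
  have hkey : ∀ q x, w q x ⬝ᵥ (Hb *ᵥ w q x)
      = v x ⬝ᵥ ((H11 - H12*H22⁻¹*H12ᵀ) *ᵥ v x)
        + (q x + B *ᵥ v x) ⬝ᵥ (H22 *ᵥ (q x + B *ᵥ v x)) :=
    fun q x => key_quad H11 H12 H22 hsym hinv (v x) (q x)
  have hstar_pt : ∀ x, w qstar x ⬝ᵥ (Hb *ᵥ w qstar x)
      = v x ⬝ᵥ ((H11 - H12*H22⁻¹*H12ᵀ) *ᵥ v x) := by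
    intro x
    rw [hkey]
    have h0 : qstar x + B *ᵥ v x = 0 := by
      rw [hqdef]
      simp [hvdef]
    rw [h0]
    simp
  have hpos : ∀ (q : (Fin n → ℝ) → (Fin k → ℝ)) (x : Fin n → ℝ), (0:ℝ) ≤ (q x + B *ᵥ v x) ⬝ᵥ (H22 *ᵥ (q x + B *ᵥ v x)) := by
    intro q x
    have := hpd22.posSemidef.dotProduct_mulVec_nonneg (q x + B *ᵥ v x)
    simpa using this
  -- integrability of the quadratic functional
  have hintF : ∀ q, (∀ i j, Integrable (fun x => w q x i * w q x j) θ) →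
      Integrable (fun x => w q x ⬝ᵥ (Hb *ᵥ w q x)) θ := by
    intro q hint
    have h1 : (fun x => w q x ⬝ᵥ (Hb *ᵥ w q x))
        = fun x => ∑ i, ∑ j, Hb i j * (w q x j * w q x i) := by
      funext x
      simp only [dotProduct, Matrix.mulVec, Finset.mul_sum]
      exact Finset.sum_congr rfl fun i _ => Finset.sum_congr rfl fun j _ => by ring
    rw [h1]
    exact integrable_finset_sum _ fun i _ => integrable_finset_sum _ fun j _ =>
      ((hint j i).const_mul _)
  refine ⟨hAdmStar, ?_, ?_⟩
  · -- minimality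
    intro q hq
    obtain ⟨hqm, hqint, hqz⟩ := (hAdm q).mp hq
    have hqint' : ∀ i j, Integrable (fun x => w q x i * w q x j) θ := fun i j => hqint i j
    rw [htr qstar hintw, htr q hqint']
    refine integral_mono (hintF qstar hintw) (hintF q hqint') ?_
    intro x
    show w qstar x ⬝ᵥ (Hb *ᵥ w qstar x) ≤ w q x ⬝ᵥ (Hb *ᵥ w q x)
    rw [hstar_pt, hkey]
    have := hpos q x
    linarith
  · -- value at qstar
    rw [htr qstar hintw]
    have h1 : (fun x => w qstar x ⬝ᵥ (Hb *ᵥ w qstar x))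
        = fun x => ∑ i, ∑ j, (H11 - H12*H22⁻¹*H12ᵀ) i j * (v x j * v x i) := by
      funext x
      rw [hstar_pt]
      simp only [dotProduct, Matrix.mulVec, Finset.mul_sum]
      exact Finset.sum_congr rfl fun i _ => Finset.sum_congr rfl fun j _ => by ring
    rw [h1, integral_finset_sum _ fun i _ => integrable_finset_sum _ fun j _ =>
      ((hv2 j i).const_mul ((H11 - H12*H22⁻¹*H12ᵀ) i j))]
    have h2 : ((H11 - H12 * H22⁻¹ * H12ᵀ) * Sθ).trace
        = ∑ i, ∑ j, (H11 - H12*H22⁻¹*H12ᵀ) i j * Sθ j i := by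
      simp [Matrix.trace, Matrix.diag, Matrix.mul_apply]
    rw [h2]
    refine Finset.sum_congr rfl fun i _ => ?_
    rw [integral_finset_sum _ fun j _ => ((hv2 j i).const_mul ((H11 - H12*H22⁻¹*H12ᵀ) i j))]
    refine Finset.sum_congr rfl fun j _ => ?_
    rw [hSθ, integral_const_mul]
end

section
/- Covariance of the pushforward belief when the local mode is unobserved: with the setup of the switched dynamics f(x,m,w) = D(m)·vec(c, x, u, q̄(m)+q̃(x,m)) + w and Y = f(X,M,W) with X ~ θ, M ~ π, W ~ π_W independent, Cov(Y) = Σ_m π(m) [D(m)]₁ Cov((X, q̃(X,m))) [D(m)]₁ᵀ + Cov(π_W) + Σ_m π(m) v(m) v(m)ᵀ - v̄ v̄ᵀ, where v(m) = D(m)·vec(c, μ(θ), u, q̄(m)) and v̄ = Σ_m π(m) v(m), and [D(m)]₁ denotes the submatrix of D(m) acting on (x, q̃)-components. -/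
open Matrix MeasureTheory Finset

/-- Covariance of the pushforward belief when the local mode is
unobserved. For `Y = f(X, M, W)` with
`f(x,m,w) = D(m)·vec(c, x, u, q̄(m) + q̃(x,m)) + w`, `X ~ θ`, `M ~ π`,
`W ~ πW` independent, `q̃(·,m)` θ-mean-zero:
`Cov(Y) = Σ_m π(m) [D(m)]₁ Cov((X, q̃(X,m))) [D(m)]₁ᵀ + Cov(πW)
  + Σ_m π(m) v(m) v(m)ᵀ - v̄ v̄ᵀ`,
where `v(m) = D(m)·vec(c, μ(θ), u, q̄(m))`, `v̄ = Σ_m π(m) v(m)`, and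
`[D(m)]₁` is the submatrix of `D(m)` on the `(x, q̃)`-columns. -/
theorem pushforward_cov_switched
    {d n k0 k1 κ : ℕ}
    (θ : Measure (Fin n → ℝ)) [IsProbabilityMeasure θ]
    (πW : Measure (Fin n → ℝ)) [IsProbabilityMeasure πW]
    (π : Fin κ → ℝ) (hπ0 : ∀ m, 0 ≤ π m) (hπ1 : ∑ m, π m = 1)
    (D : Fin κ → Matrix (Fin n) (Fin d ⊕ (Fin n ⊕ (Fin k0 ⊕ Fin k1))) ℝ)
    (c : Fin d → ℝ) (u : Fin k0 → ℝ)
    (qbar : Fin κ → Fin k1 → ℝ)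
    (qtil : (Fin n → ℝ) → Fin κ → Fin k1 → ℝ)
    (hqmeas : ∀ m, Measurable (fun x => qtil x m))
    (hq0 : ∀ m, (∫ x, qtil x m ∂θ) = 0)
    -- second moments of θ and of (X - μθ, q̃(X,m))
    (hθ1 : ∀ i : Fin n, Integrable (fun x : Fin n → ℝ => x i) θ)
    (μθ : Fin n → ℝ) (hμθ : ∀ i, μθ i = ∫ x, x i ∂θ)
    (g : Fin κ → (Fin n → ℝ) → (Fin n ⊕ Fin k1 → ℝ))
    (hg : ∀ m x, g m x =
      Sum.elim (fun a => x a - μθ a) (fun b => qtil x m b))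
    (hg2 : ∀ m (i j : Fin n ⊕ Fin k1),
      Integrable (fun x => g m x i * g m x j) θ)
    -- covariance of (X, q̃(X,m))
    (Covm : Fin κ → Matrix (Fin n ⊕ Fin k1) (Fin n ⊕ Fin k1) ℝ)
    (hCovm : ∀ m i j, Covm m i j = ∫ x, g m x i * g m x j ∂θ)
    -- second moments of the noise
    (hW1 : ∀ i : Fin n, Integrable (fun w : Fin n → ℝ => w i) πW)
    (hW2 : ∀ i j : Fin n, Integrable (fun w : Fin n → ℝ => w i * w j) πW)
    (hW0 : ∀ i : Fin n, (∫ w, w i ∂πW) = 0)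
    (SW : Matrix (Fin n) (Fin n) ℝ)
    (hSW : ∀ i j, SW i j = ∫ w, w i * w j ∂πW) :
    -- dynamics, means, submatrix on (x, q̃)-columns
    let f : (Fin n → ℝ) → Fin κ → (Fin n → ℝ) → (Fin n → ℝ) :=
      fun x m w =>
        D m *ᵥ (Sum.elim c (Sum.elim x
          (Sum.elim u (fun j => qbar m j + qtil x m j)))) + w
    let v : Fin κ → Fin n → ℝ :=
      fun m => D m *ᵥ Sum.elim c (Sum.elim μθ (Sum.elim u (qbar m)))
    let vbar : Fin n → ℝ := ∑ m, π m • v m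
    let D1 : Fin κ → Matrix (Fin n) (Fin n ⊕ Fin k1) ℝ :=
      fun m => Matrix.of fun i j => D m i
        (Sum.elim (fun a : Fin n => (Sum.inr (Sum.inl a) :
            Fin d ⊕ (Fin n ⊕ (Fin k0 ⊕ Fin k1))))
          (fun b : Fin k1 => Sum.inr (Sum.inr (Sum.inr b))) j)
    ∀ i j : Fin n,
      (∑ m, π m * ∫ x, ∫ w,
          (f x m w i - vbar i) * (f x m w j - vbar j) ∂πW ∂θ) =
        (∑ m, π m * (D1 m * Covm m * (D1 m)ᵀ) i j) + SW i j +
          ((∑ m, π m * (v m i * v m j)) - vbar i * vbar j) := by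

  intro f v vbar D1 i j
  classical
  -- measurability of the coordinates of g
  have hgsm : ∀ m (p : Fin n ⊕ Fin k1), AEStronglyMeasurable (fun x => g m x p) θ := by
    intro m p
    have hm : Measurable fun x => g m x p := by
      have he : (fun x => g m x p) =
          (fun x => Sum.elim (fun a => x a - μθ a) (fun b => qtil x m b) p) := by
        funext x; rw [hg]
      rw [he]
      cases p with
      | inl a => exact (measurable_pi_apply a).sub measurable_const
      | inr b => exact (measurable_pi_apply b).comp (hqmeas m)
    exact hm.aestronglyMeasurable
  -- integrability of the coordinates of g (via L²)
  have hgint : ∀ m p, Integrable (fun x => g m x p) θ := by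
    intro m p
    have h2 : Integrable (fun x => (g m x p) ^ 2) θ := by
      simpa [pow_two] using hg2 m p p
    exact ((memLp_two_iff_integrable_sq (hgsm m p)).2 h2).integrable one_le_two
  -- the coordinates of g are θ-mean-zero
  have hgmean : ∀ m p, (∫ x, g m x p ∂θ) = 0 := by
    intro m p
    cases p with
    | inl a =>
      have he : (fun x => g m x (Sum.inl a)) = fun x => x a - μθ a := by
        funext x; rw [hg]; rfl
      rw [he, integral_sub (hθ1 a) (integrable_const _), integral_const]
      simp [hμθ a]
    | inr b =>
      have hqint : Integrable (fun x => qtil x m b) θ := by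
        have := hgint m (Sum.inr b)
        have he : (fun x => g m x (Sum.inr b)) = fun x => qtil x m b := by
          funext x; rw [hg]; rfl
        rwa [he] at this
      have hint : Integrable (fun x => qtil x m) θ := by
        have he : (fun x => qtil x m) =
            fun x => ∑ b', (qtil x m b') • (Pi.single b' 1 : Fin k1 → ℝ) := by
          funext x j
          simp [Finset.sum_apply, Pi.single_apply]
        rw [he]
        refine integrable_finset_sum _ fun b' _ => ?_
        have hqint' : Integrable (fun x => qtil x m b') θ := by
          have := hgint m (Sum.inr b')
          have he' : (fun x => g m x (Sum.inr b')) = fun x => qtil x m b' := by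
            funext x; rw [hg]; rfl
          rwa [he'] at this
        exact hqint'.smul_const _
      have hcomm := (ContinuousLinearMap.proj (R := ℝ)
        (φ := fun _ : Fin k1 => ℝ) b).integral_comp_comm hint
      have he : (fun x => g m x (Sum.inr b)) = fun x => qtil x m b := by
        funext x; rw [hg]; rfl
      rw [he]
      have : (∫ x, qtil x m b ∂θ) = (∫ x, qtil x m ∂θ) b := by
        simpa using hcomm
      rw [this, hq0 m]
      rfl
  -- per-mode computation
  have key : ∀ m : Fin κ,
      (∫ x, ∫ w, (f x m w i - vbar i) * (f x m w j - vbar j) ∂πW ∂θ) =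
        (D1 m * Covm m * (D1 m)ᵀ) i j + SW i j +
          (v m i - vbar i) * (v m j - vbar j) := by
    intro m
    set A : (Fin n → ℝ) → Fin n → ℝ :=
      fun x i' => ∑ p, D1 m i' p * g m x p with hA
    -- pointwise decomposition
    have hf : ∀ (x w : Fin n → ℝ) (i' : Fin n),
        f x m w i' - vbar i' = ((v m i' - vbar i') + A x i') + w i' := by
      intro x w i'
      have hval : f x m w i' = v m i' + (A x i' + w i') := by
        simp only [f, v, hA, D1, Pi.add_apply, Matrix.mulVec, dotProduct,
          Fintype.sum_sum_type, Matrix.of_apply, Sum.elim_inl, Sum.elim_inr, hg,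
          mul_add, mul_sub, Finset.sum_add_distrib, Finset.sum_sub_distrib]
        ring
      rw [hval]; ring
    set a : ℝ := v m i - vbar i with ha
    set b : ℝ := v m j - vbar j with hb
    -- inner integral over the noise
    have hinner : ∀ x : Fin n → ℝ,
        (∫ w, (f x m w i - vbar i) * (f x m w j - vbar j) ∂πW) =
          (a + A x i) * (b + A x j) + SW i j := by
      intro x
      have h : (fun w : Fin n → ℝ =>
          (f x m w i - vbar i) * (f x m w j - vbar j)) =
          fun w => ((a + A x i) * (b + A x j) + (a + A x i) * w j) +
            (w i * (b + A x j) + w i * w j) := by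
        funext w; rw [hf x w i, hf x w j]; ring
      have h1 : Integrable (fun _ : Fin n → ℝ =>
          (a + A x i) * (b + A x j)) πW := integrable_const _
      have h2 : Integrable (fun w : Fin n → ℝ =>
          (a + A x i) * w j) πW := (hW1 j).const_mul _
      have h3 : Integrable (fun w : Fin n → ℝ =>
          w i * (b + A x j)) πW := (hW1 i).mul_const _
      have h4 : Integrable (fun w : Fin n → ℝ => w i * w j) πW := hW2 i j
      have h12 : Integrable (fun w : Fin n → ℝ =>
          (a + A x i) * (b + A x j) + (a + A x i) * w j) πW := h1.add h2
      have h34 : Integrable (fun w : Fin n → ℝ =>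
          w i * (b + A x j) + w i * w j) πW := h3.add h4
      rw [h, integral_add h12 h34, integral_add h1 h2,
          integral_add h3 h4, integral_const, integral_const_mul,
          integral_mul_const, hW0, hW0, ← hSW i j]
      simp
    have hfx : (fun x => ∫ w,
        (f x m w i - vbar i) * (f x m w j - vbar j) ∂πW) =
        fun x => (a + A x i) * (b + A x j) + SW i j := funext hinner
    rw [hfx]
    -- integrability facts over θ
    have hAint : ∀ i', Integrable (fun x => A x i') θ := fun i' =>
      integrable_finset_sum _ (fun p _ => (hgint m p).const_mul _)
    have hAAeq : (fun x => A x i * A x j) =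
        fun x => ∑ p, ∑ q, (D1 m i p * D1 m j q) * (g m x p * g m x q) := by
      funext x
      rw [hA]
      rw [Finset.sum_mul_sum]
      exact Finset.sum_congr rfl fun p _ => Finset.sum_congr rfl fun q _ => by ring
    have hAAint : Integrable (fun x => A x i * A x j) θ := by
      rw [hAAeq]
      exact integrable_finset_sum _ fun p _ =>
        integrable_finset_sum _ fun q _ => (hg2 m p q).const_mul _
    have hAmean : ∀ i', (∫ x, A x i' ∂θ) = 0 := by
      intro i'
      rw [hA, integral_finset_sum _ (fun p _ => (hgint m p).const_mul _)]
      simp [integral_const_mul, hgmean]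
    have hAA : (∫ x, A x i * A x j ∂θ) = (D1 m * Covm m * (D1 m)ᵀ) i j := by
      rw [hAAeq, integral_finset_sum _ (fun p _ =>
        integrable_finset_sum _ fun q _ => (hg2 m p q).const_mul _)]
      have hM : (D1 m * Covm m * (D1 m)ᵀ) i j =
          ∑ q, ∑ p, D1 m i p * Covm m p q * D1 m j q := by
        rw [Matrix.mul_apply]
        refine Finset.sum_congr rfl fun q _ => ?_
        rw [Matrix.mul_apply, Matrix.transpose_apply, Finset.sum_mul]
      rw [hM, Finset.sum_comm]
      refine Finset.sum_congr rfl fun p _ => ?_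
      rw [integral_finset_sum _ (fun q _ => (hg2 m p q).const_mul _)]
      refine Finset.sum_congr rfl fun q _ => ?_
      rw [integral_const_mul, ← hCovm m p q]
      ring
    -- outer integral
    have hfun : (fun x : Fin n → ℝ => (a + A x i) * (b + A x j) + SW i j) =
        fun x => (a * b + SW i j) +
          ((a * A x j + b * A x i) + A x i * A x j) := by
      funext x; ring
    have k1' : Integrable (fun _ : Fin n → ℝ => a * b + SW i j) θ :=
      integrable_const _
    have k2 : Integrable (fun x => a * A x j) θ := (hAint j).const_mul a
    have k3 : Integrable (fun x => b * A x i) θ := (hAint i).const_mul b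
    have k23 : Integrable (fun x => a * A x j + b * A x i) θ := k2.add k3
    have k234 : Integrable (fun x => (a * A x j + b * A x i) + A x i * A x j) θ :=
      k23.add hAAint
    rw [hfun, integral_add k1' k234, integral_add k23 hAAint,
        integral_add k2 k3,
        integral_const, integral_const_mul, integral_const_mul,
        hAmean i, hAmean j, hAA]
    simp
    ring
  -- sum over modes
  have hvbar : ∀ i', vbar i' = ∑ m, π m * v m i' := by
    intro i'
    simp [vbar, Finset.sum_apply, Pi.smul_apply, smul_eq_mul]
  have hexp : (∑ m, π m * ∫ x, ∫ w,
      (f x m w i - vbar i) * (f x m w j - vbar j) ∂πW ∂θ) =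
      ∑ m, (π m * (D1 m * Covm m * (D1 m)ᵀ) i j + π m * SW i j +
        (π m * (v m i * v m j) - (π m * v m i) * vbar j -
          vbar i * (π m * v m j) + π m * (vbar i * vbar j))) := by
    refine Finset.sum_congr rfl fun m _ => ?_
    rw [key m]; ring
  rw [hexp]
  simp only [Finset.sum_add_distrib, Finset.sum_sub_distrib, ← Finset.sum_mul,
    ← Finset.mul_sum, hπ1, ← hvbar]
  ring
end
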